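/- arXiv:0907.0226 — 2 statements merged into one kernel-verified Lean document; each statement's English description precedes it below -/
import Mathlib

section
/- Let τ ≥ 1 be an integer, u₁, u₂ ∈ ℝ, and α, β real numbers with α > β and 1 ± (α + β) > 0. Define G(x,y) = ((y−x)^{τ−1}/(τ−1)!) e^{(x−y)/2} 1_{[x<y]} and H(x,y) = ((x−y)^{τ−1}/(τ−1)!) e^{−(x−y)/2} 1_{[x>y]}. Then the kernels A(x,y) = 1_{[x≥u₁]} e^{−αx} G(x,y) e^{(α+β)y/2} and B(x,y) = e^{−(α+β)x/2} H(x,y) e^{βy} 1_{[y≥u₂]} are both Hilbert–Schmidt on L²(ℝ), i.e., ∫∫ |A(x,y)|² dx dy < ∞ and ∫∫ |B(x,y)|² dx dy < ∞. -/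
open MeasureTheory Set

/-- The kernel `G(x,y) = ((y−x)^{τ−1}/(τ−1)!) e^{(x−y)/2} 1_{[x<y]}`. -/
noncomputable def Gker (τ : ℕ) (x y : ℝ) : ℝ :=
  if x < y then (y - x) ^ (τ - 1) / (Nat.factorial (τ - 1)) * Real.exp ((x - y) / 2) else 0

/-- The kernel `H(x,y) = ((x−y)^{τ−1}/(τ−1)!) e^{−(x−y)/2} 1_{[x>y]}`. -/
noncomputable def Hker (τ : ℕ) (x y : ℝ) : ℝ :=
  if y < x then (x - y) ^ (τ - 1) / (Nat.factorial (τ - 1)) * Real.exp (-(x - y) / 2) else 0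

/-!
Squaring, both kernels factor as `c · f(x) · g(y − x)` (resp. `c · f(y) · g(x − y)`) with
`f = 1_{[u,∞)} e^{−(α−β)·}` and `g(s) = 1_{s>0} s^{2(τ−1)} e^{−(1 ∓ (α+β)) s}`, both integrable
since `α − β > 0` and `1 ∓ (α+β) > 0`. The shear `(x, y) ↦ (x, y − x)` preserves Lebesgue measure
on `ℝ²`, so such a product is integrable by Fubini.
-/

section Shear

variable {G : Type*} [MeasurableSpace G] [AddGroup G] [MeasurableAdd₂ G] [MeasurableNeg G]
  {μ : Measure G} [SFinite μ] [μ.IsAddRightInvariant] {R : Type*} [NormedRing R] {f g : G → R}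

theorem MeasureTheory.Integrable.mul_comp_sub_fst (hf : Integrable f μ) (hg : Integrable g μ) :
    Integrable (fun p : G × G => f p.1 * g (p.2 - p.1)) (μ.prod μ) :=
  ((measurePreserving_prod_sub μ μ).integrable_comp (hf.mul_prod hg).aestronglyMeasurable).mpr (hf.mul_prod hg)

theorem MeasureTheory.Integrable.mul_comp_sub_snd (hf : Integrable f μ) (hg : Integrable g μ) :
    Integrable (fun p : G × G => f p.2 * g (p.1 - p.2)) (μ.prod μ) :=
  (hf.mul_comp_sub_fst hg).swap

end Shear

theorem integrable_indicator_Ici_exp_neg_mul {a : ℝ} (u : ℝ) (ha : 0 < a) :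
    Integrable ((Ici u).indicator fun x => Real.exp (-a * x)) := by
  rw [integrable_indicator_iff measurableSet_Ici, integrableOn_Ici_iff_integrableOn_Ioi]
  exact exp_neg_integrableOn_Ioi u ha

theorem integrable_indicator_Ioi_pow_mul_exp_neg_mul {b : ℝ} (n : ℕ) (hb : 0 < b) :
    Integrable ((Ioi 0).indicator fun s : ℝ => s ^ n * Real.exp (-b * s)) := by
  rw [integrable_indicator_iff measurableSet_Ioi]
  refine (integrableOn_rpow_mul_exp_neg_mul_rpow (p := 1) (s := n)
    (neg_one_lt_zero.trans_le n.cast_nonneg) one_pos hb).congr_fun (fun s _ => ?_) measurableSet_Ioi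
  simp only [Real.rpow_natCast, Real.rpow_one]

theorem sq_indicator_mul_exp_mul_Gker_mul_exp (τ : ℕ) (u α β x y : ℝ) :
    ((if u ≤ x then (1:ℝ) else 0) * Real.exp (-α * x) * Gker τ x y *
        Real.exp ((α + β) * y / 2)) ^ 2 =
      ((Nat.factorial (τ - 1) : ℝ) ^ 2)⁻¹ *
        ((Ici u).indicator (fun x => Real.exp (-(α - β) * x)) x *
          (Ioi 0).indicator (fun s => s ^ (2 * (τ - 1)) * Real.exp (-(1 - (α + β)) * s))
            (y - x)) := by
  have hexp : Real.exp (-(α - β) * x) * Real.exp (-(1 - (α + β)) * (y - x)) =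
      (Real.exp (-α * x) * Real.exp ((x - y) / 2) * Real.exp ((α + β) * y / 2)) ^ 2 := by
    simp only [← Real.exp_add, ← Real.exp_nat_mul]
    congr 1; push_cast; ring
  by_cases hxy : x < y
  · by_cases hu : u ≤ x
    · rw [Gker, if_pos hxy, if_pos hu, indicator_of_mem (mem_Ici.mpr hu),
        indicator_of_mem (mem_Ioi.mpr (sub_pos.mpr hxy)), pow_mul']
      linear_combination (-((y - x) ^ (τ - 1)) ^ 2 / (Nat.factorial (τ - 1) : ℝ) ^ 2) * hexp
    · simp [hu]
  · simp [Gker, hxy, indicator_of_notMem]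

theorem sq_exp_mul_Hker_mul_exp_mul_indicator (τ : ℕ) (u α β x y : ℝ) :
    (Real.exp (-(α + β) * x / 2) * Hker τ x y * Real.exp (β * y) *
        (if u ≤ y then (1:ℝ) else 0)) ^ 2 =
      ((Nat.factorial (τ - 1) : ℝ) ^ 2)⁻¹ *
        ((Ici u).indicator (fun y => Real.exp (-(α - β) * y)) y *
          (Ioi 0).indicator (fun s => s ^ (2 * (τ - 1)) * Real.exp (-(1 + (α + β)) * s))
            (x - y)) := by
  have hexp : Real.exp (-(α - β) * y) * Real.exp (-(1 + (α + β)) * (x - y)) =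
      (Real.exp (-(α + β) * x / 2) * Real.exp (-(x - y) / 2) * Real.exp (β * y)) ^ 2 := by
    simp only [← Real.exp_add, ← Real.exp_nat_mul]
    congr 1; push_cast; ring
  by_cases hxy : y < x
  · by_cases hu : u ≤ y
    · rw [Hker, if_pos hxy, if_pos hu, indicator_of_mem (mem_Ici.mpr hu),
        indicator_of_mem (mem_Ioi.mpr (sub_pos.mpr hxy)), pow_mul']
      linear_combination (-((x - y) ^ (τ - 1)) ^ 2 / (Nat.factorial (τ - 1) : ℝ) ^ 2) * hexp
    · simp [hu]
  · simp [Hker, hxy, indicator_of_notMem]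

theorem stmt9_general (τ : ℕ) (u₁ u₂ α β : ℝ) (hαβ : β < α)
    (h₁ : 0 < 1 + (α + β)) (h₂ : 0 < 1 - (α + β)) :
    Integrable (fun p : ℝ × ℝ =>
      ((if u₁ ≤ p.1 then (1:ℝ) else 0) * Real.exp (-α * p.1) * Gker τ p.1 p.2 *
        Real.exp ((α + β) * p.2 / 2)) ^ 2) ∧
    Integrable (fun p : ℝ × ℝ =>
      (Real.exp (-(α + β) * p.1 / 2) * Hker τ p.1 p.2 * Real.exp (β * p.2) *
        (if u₂ ≤ p.2 then (1:ℝ) else 0)) ^ 2) := by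
  have hαβ' : 0 < α - β := sub_pos.mpr hαβ
  rw [Measure.volume_eq_prod]
  constructor
  · simp only [sq_indicator_mul_exp_mul_Gker_mul_exp]
    exact ((integrable_indicator_Ici_exp_neg_mul u₁ hαβ').mul_comp_sub_fst
      (integrable_indicator_Ioi_pow_mul_exp_neg_mul _ h₂)).const_mul _
  · simp only [sq_exp_mul_Hker_mul_exp_mul_indicator]
    exact ((integrable_indicator_Ici_exp_neg_mul u₂ hαβ').mul_comp_sub_snd
      (integrable_indicator_Ioi_pow_mul_exp_neg_mul _ h₁)).const_mul _

/-- The projected and conjugated kernels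
`A(x,y) = 1_{[x≥u₁]} e^{−αx} G(x,y) e^{(α+β)y/2}` and
`B(x,y) = e^{−(α+β)x/2} H(x,y) e^{βy} 1_{[y≥u₂]}` are Hilbert–Schmidt:
their squares are integrable on `ℝ²`. -/
theorem stmt9 (τ : ℕ) (hτ : 1 ≤ τ) (u₁ u₂ α β : ℝ) (hαβ : β < α)
    (h₁ : 0 < 1 + (α + β)) (h₂ : 0 < 1 - (α + β)) :
    Integrable (fun p : ℝ × ℝ =>
      ((if u₁ ≤ p.1 then (1:ℝ) else 0) * Real.exp (-α * p.1) * Gker τ p.1 p.2 *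
        Real.exp ((α + β) * p.2 / 2)) ^ 2) ∧
    Integrable (fun p : ℝ × ℝ =>
      (Real.exp (-(α + β) * p.1 / 2) * Hker τ p.1 p.2 * Real.exp (β * p.2) *
        (if u₂ ≤ p.2 then (1:ℝ) else 0)) ^ 2) :=
  stmt9_general τ u₁ u₂ α β hαβ h₁ h₂
end

section
/- Let ρ ∈ (0,1) and let h₀ be as in the steepest-descent phase function, h₀(w) = −w + ρ² log(1/2 + w) − (1−ρ)² log(1/2 − w). Along the ray γ₁ = { w = ρ − 1/2 + e^{−iπ/3} t : t ∈ [0, 2(1−ρ)] }, the derivative of Re(h₀(w)) with respect to t equals − t²(2ρ(1−ρ) + (1−2ρ)t + t²) / (2 |1/2 − w|² |1/2 + w|²), and the quadratic 2ρ(1−ρ) + (1−2ρ)t + t² is strictly positive for all ρ ∈ (0,1) and t ∈ [0, 2(1−ρ)]; hence Re(h₀) is non-increasing along γ₁ (strictly decreasing for t > 0). -/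
/-!
Write `ω = e^{-iπ/3}`, so that `ω² = ω - 1` and `ω³ = -1`, and put `a = 1/2 + w = ρ + ωt`,
`b = 1/2 - w = 1 - ρ - ωt` on `γ₁`. Since `a + b = 1`, partial fractions collapse to
`h₀'(w) = (ωt)² / (ab)`: the point `ρ - 1/2` is a double critical point. Hence
`d/dt Re h₀(γ₁ t) = Re (ω h₀'(w)) = -t² Re(ab) / |ab|²`, and `Re(ab) = q(t)/2` because
`Re ω = 1/2` and `ω² = ω - 1`.
-/

open Complex Set

noncomputable def rayDir : ℂ := exp (-(Real.pi / 3 : ℝ) * I)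

lemma rayDir_re : rayDir.re = 1 / 2 := by
  rw [rayDir, ← ofReal_neg, exp_ofReal_mul_I_re, Real.cos_neg, Real.cos_pi_div_three]

lemma rayDir_im : rayDir.im = -(√3 / 2) := by
  rw [rayDir, ← ofReal_neg, exp_ofReal_mul_I_im, Real.sin_neg, Real.sin_pi_div_three]

lemma rayDir_sq : rayDir ^ 2 = rayDir - 1 := by
  have h3 : √3 ^ 2 = 3 := Real.sq_sqrt (by norm_num)
  apply Complex.ext
  · simp only [pow_two, mul_re, sub_re, one_re, rayDir_re, rayDir_im]
    linear_combination (-1 / 4 : ℝ) * h3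
  · simp only [pow_two, mul_im, sub_im, one_im, rayDir_re, rayDir_im]
    ring

lemma rayDir_pow_three : rayDir ^ 3 = -1 := by
  linear_combination (rayDir + 1) * rayDir_sq

lemma neg_one_add_sq_div_add_sq_div {K : Type*} [Field K] (c z : K) (ha : c + z ≠ 0)
    (hb : 1 - c - z ≠ 0) :
    -1 + c ^ 2 / (c + z) + (1 - c) ^ 2 / (1 - c - z) = z ^ 2 / ((c + z) * (1 - c - z)) := by
  field_simp
  ring

noncomputable def phase (c w : ℂ) : ℂ :=
  -w + c ^ 2 * log (1 / 2 + w) - (1 - c) ^ 2 * log (1 / 2 - w)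

lemma hasDerivAt_phase (c : ℂ) {w : ℂ} (ha : 1 / 2 + w ∈ slitPlane)
    (hb : 1 / 2 - w ∈ slitPlane) :
    HasDerivAt (phase c) (-1 + c ^ 2 / (1 / 2 + w) + (1 - c) ^ 2 / (1 / 2 - w)) w := by
  have hla := ((hasDerivAt_id' w).const_add (1 / 2)).clog ha
  have hlb := ((hasDerivAt_id' w).const_sub (1 / 2)).clog hb
  refine (((hasDerivAt_id' w).neg.add (hla.const_mul (c ^ 2))).sub
    (hlb.const_mul ((1 - c) ^ 2))).congr_deriv ?_
  ring

lemma HasDerivAt.re_comp_line {f : ℂ → ℂ} {f' p e : ℂ} {t : ℝ}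
    (h : HasDerivAt f f' (p + e * t)) :
    HasDerivAt (fun u : ℝ => (f (p + e * u)).re) (f' * e).re t := by
  have hline : HasDerivAt (fun z : ℂ => p + e * z) e t := by
    simpa using ((hasDerivAt_id (t : ℂ)).const_mul e).const_add p
  exact (h.comp (t : ℂ) hline).real_of_complex

lemma re_mul_ray (ρ t : ℝ) :
    ((ρ + rayDir * t) * (1 - ρ - rayDir * t)).re =
      (2 * ρ * (1 - ρ) + (1 - 2 * ρ) * t + t ^ 2) / 2 := by
  have h : (ρ + rayDir * t) * (1 - ρ - rayDir * t) =
      ((ρ * (1 - ρ) + t ^ 2 : ℝ) : ℂ) + rayDir * ((1 - 2 * ρ) * t - t ^ 2 : ℝ) := by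
    push_cast
    linear_combination (-(t : ℂ) ^ 2) * rayDir_sq
  rw [h, add_re, ofReal_re, re_mul_ofReal, rayDir_re]
  ring

lemma ofReal_add_rayDir_mul_mem_slitPlane {ρ t : ℝ} (hρ : 0 < ρ) (ht : 0 ≤ t) :
    (ρ + rayDir * t : ℂ) ∈ slitPlane := by
  refine mem_slitPlane_iff.2 (Or.inl ?_)
  rw [add_re, ofReal_re, re_mul_ofReal, rayDir_re]
  positivity

lemma one_sub_ofReal_sub_rayDir_mul_mem_slitPlane {ρ t : ℝ} (hρ : ρ < 1) (ht : 0 ≤ t) :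
    (1 - ρ - rayDir * t : ℂ) ∈ slitPlane := by
  rcases ht.eq_or_lt with rfl | ht
  · refine mem_slitPlane_iff.2 (Or.inl ?_)
    simpa using hρ
  · refine mem_slitPlane_iff.2 (Or.inr ?_)
    rw [sub_im, sub_im, one_im, ofReal_im, im_mul_ofReal, rayDir_im]
    have hs : 0 < √3 := by positivity
    nlinarith

lemma quadratic_pos_of_mem_Icc {ρ t : ℝ} (hρ : ρ ∈ Ioo 0 1)
    (ht : t ∈ Icc 0 (2 * (1 - ρ))) :
    0 < 2 * ρ * (1 - ρ) + (1 - 2 * ρ) * t + t ^ 2 := by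
  obtain ⟨hρ0, hρ1⟩ := hρ
  obtain ⟨ht0, ht1⟩ := ht
  rcases ht0.eq_or_lt with rfl | ht0
  · nlinarith
  · -- the quadratic equals `ρ (2 (1 - ρ) - t) + (1 - ρ) t + t ^ 2`
    nlinarith [mul_nonneg hρ0.le (sub_nonneg.2 ht1), mul_pos ht0 (sub_pos.2 hρ1)]

lemma hasDerivAt_re_phase_ray {ρ t : ℝ} (hρ : ρ ∈ Ioo 0 1) (ht : 0 ≤ t) :
    HasDerivAt (fun u : ℝ => (phase ρ (ρ - 1 / 2 + rayDir * u)).re)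
      (-(t ^ 2 * (2 * ρ * (1 - ρ) + (1 - 2 * ρ) * t + t ^ 2)) /
        (2 * ‖1 / 2 - (ρ - 1 / 2 + rayDir * t)‖ ^ 2 *
          ‖1 / 2 + (ρ - 1 / 2 + rayDir * t)‖ ^ 2)) t := by
  have hplus : 1 / 2 + (ρ - 1 / 2 + rayDir * t) = ρ + rayDir * t := by ring
  have hminus : 1 / 2 - (ρ - 1 / 2 + rayDir * t) = 1 - ρ - rayDir * t := by ring
  have ha := ofReal_add_rayDir_mul_mem_slitPlane hρ.1 ht
  have hb := one_sub_ofReal_sub_rayDir_mul_mem_slitPlane hρ.2 ht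
  refine (hasDerivAt_phase ρ (hplus ▸ ha) (hminus ▸ hb)).re_comp_line.congr_deriv ?_
  rw [hplus, hminus,
    neg_one_add_sq_div_add_sq_div _ _ (slitPlane_ne_zero ha) (slitPlane_ne_zero hb)]
  have hcube : (rayDir * t) ^ 2 / ((ρ + rayDir * t) * (1 - ρ - rayDir * t)) * rayDir =
      (-t ^ 2 : ℝ) * ((ρ + rayDir * t) * (1 - ρ - rayDir * t))⁻¹ := by
    push_cast
    linear_combination
      (t : ℂ) ^ 2 / ((ρ + rayDir * t) * (1 - ρ - rayDir * t)) * rayDir_pow_three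
  rw [hcube, re_ofReal_mul, inv_re, re_mul_ray, normSq_mul, Complex.sq_norm, Complex.sq_norm]
  have hna := normSq_pos.2 (slitPlane_ne_zero ha)
  have hnb := normSq_pos.2 (slitPlane_ne_zero hb)
  field_simp

/-- Along the ray `γ₁ = {ρ − 1/2 + e^{−iπ/3} t : t ∈ [0, 2(1−ρ)]}`, the derivative of
`Re h₀` equals `−t² q(t)/(2|1/2 − w|²|1/2 + w|²)` where the quadratic
`q(t) = 2ρ(1−ρ) + (1−2ρ)t + t²` is strictly positive; hence `Re h₀` is non-increasing
along `γ₁`. -/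
theorem stmt19 (ρ : ℝ) (hρ : ρ ∈ Set.Ioo (0:ℝ) 1) :
    let h₀ : ℂ → ℂ := fun w =>
      -w + (ρ : ℂ) ^ 2 * Complex.log (1 / 2 + w) - ((1 : ℂ) - ρ) ^ 2 * Complex.log (1 / 2 - w)
    let γ : ℝ → ℂ := fun t =>
      ((ρ : ℂ) - 1 / 2) + Complex.exp (-(Real.pi / 3 : ℝ) * Complex.I) * t
    let q : ℝ → ℝ := fun t => 2 * ρ * (1 - ρ) + (1 - 2 * ρ) * t + t ^ 2
    (∀ t ∈ Set.Icc (0:ℝ) (2 * (1 - ρ)),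
      HasDerivAt (fun u : ℝ => (h₀ (γ u)).re)
        (-(t ^ 2 * q t) /
          (2 * ‖(1 / 2 - γ t : ℂ)‖ ^ 2 * ‖(1 / 2 + γ t : ℂ)‖ ^ 2)) t ∧
      0 < q t) ∧
    AntitoneOn (fun t : ℝ => (h₀ (γ t)).re) (Set.Icc (0:ℝ) (2 * (1 - ρ))) := by
  intro h₀ γ q
  have hderiv (t : ℝ) (ht : t ∈ Icc 0 (2 * (1 - ρ))) :
      HasDerivAt (fun u : ℝ => (h₀ (γ u)).re)
        (-(t ^ 2 * q t) /
          (2 * ‖(1 / 2 - γ t : ℂ)‖ ^ 2 * ‖(1 / 2 + γ t : ℂ)‖ ^ 2)) t :=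
    hasDerivAt_re_phase_ray hρ ht.1
  refine ⟨fun t ht => ⟨hderiv t ht, quadratic_pos_of_mem_Icc hρ ht⟩, ?_⟩
  refine antitoneOn_of_hasDerivWithinAt_nonpos (convex_Icc _ _)
    (fun t ht => (hderiv t ht).continuousAt.continuousWithinAt)
    (fun t ht => (hderiv t (interior_subset ht)).hasDerivWithinAt) fun t ht => ?_
  have hq := quadratic_pos_of_mem_Icc hρ (interior_subset ht)
  exact div_nonpos_of_nonpos_of_nonneg (neg_nonpos.2 (by positivity)) (by positivity)
end
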